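/- Let (Γ,⊑) be an extended modular complex and p a vertex. Then: for any a,b ∈ L^+_p the greatest lower bound a∧b exists and lies in L^+_p, and if a,b ∈ L^+_p have a common upper bound then a∨b exists and lies in L^+_p; the set L^+_p is convex in Γ; and symmetrically, for any a,b ∈ L^-_p the least upper bound a∨b exists and lies in L^-_p, if a,b ∈ L^-_p have a common lower bound then a∧b exists and lies in L^-_p, and L^-_p is convex in Γ. -/

import Mathlib

namespace ZeroExt

variable {V : Type*}

/-- The metric interval `I(x,y)` in a graph. -/
def interval (G : SimpleGraph V) (x y : V) : Set V :=
  {z | G.dist x z + G.dist z y = G.dist x y}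

/-- `m` is a median of `x, y, z`. -/
def IsMedian (G : SimpleGraph V) (x y z m : V) : Prop :=
  m ∈ interval G x y ∧ m ∈ interval G y z ∧ m ∈ interval G x z

/-- A graph is modular if every triple of vertices has a median. -/
def Modular (G : SimpleGraph V) : Prop :=
  ∀ x y z : V, ∃ m : V, IsMedian G x y z m

/-- `(a,b,c)` is a shortest subpath. -/
def ShortestTriple (G : SimpleGraph V) (a b c : V) : Prop :=
  G.dist a b + G.dist b c = G.dist a c

/-- `(a,b,c,d)` is a shortest subpath. -/
def ShortestQuad (G : SimpleGraph V) (a b c d : V) : Prop :=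
  G.dist a b + G.dist b c + G.dist c d = G.dist a d

/-- `(x1,x2,x3,x4)` is an isometric rectangle. -/
def IsoRect (G : SimpleGraph V) (x1 x2 x3 x4 : V) : Prop :=
  ShortestTriple G x4 x1 x2 ∧ ShortestTriple G x1 x2 x3 ∧
    ShortestTriple G x2 x3 x4 ∧ ShortestTriple G x3 x4 x1

/-- A set of vertices is convex if it contains the interval of each pair of its points. -/
def Convex (G : SimpleGraph V) (U : Set V) : Prop :=
  ∀ x ∈ U, ∀ y ∈ U, interval G x y ⊆ U

/-- `g` is a gate of `q` at `U`. -/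
def IsGate (G : SimpleGraph V) (U : Set V) (q g : V) : Prop :=
  g ∈ U ∧ ∀ u ∈ U, G.dist q u = G.dist q g + G.dist g u

/-- A 4-cycle in a graph. -/
def IsFourCycle (G : SimpleGraph V) (x1 x2 x3 x4 : V) : Prop :=
  G.Adj x1 x2 ∧ G.Adj x2 x3 ∧ G.Adj x3 x4 ∧ G.Adj x4 x1 ∧ x1 ≠ x3 ∧ x2 ≠ x4

/-- A modular complex: a finite connected modular graph together with an
acyclic admissible edge orientation. -/
structure ModularComplex (V : Type*) [Fintype V] where
  G : SimpleGraph V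
  connected : G.Connected
  modular : Modular G
  ori : V → V → Prop
  ori_adj : ∀ {x y : V}, ori x y → G.Adj x y
  ori_total : ∀ {x y : V}, G.Adj x y → ori x y ∨ ori y x
  acyclic : ∀ {x y : V}, Relation.ReflTransGen ori x y → Relation.ReflTransGen ori y x → x = y
  admissible : ∀ {x1 x2 x3 x4 : V}, IsFourCycle G x1 x2 x3 x4 → ori x1 x2 → ori x4 x3

variable [Fintype V]

/-- The partial order `⪯` induced by the orientation. -/
def ModularComplex.le (Γ : ModularComplex V) : V → V → Prop :=
  Relation.ReflTransGen Γ.ori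

/-- The order interval `[p,q]`. -/
def ModularComplex.Icc (Γ : ModularComplex V) (p q : V) : Set V :=
  {x | Γ.le p x ∧ Γ.le x q}

/-- `m` is the greatest lower bound `p ∧ q`. -/
def ModularComplex.IsMeet (Γ : ModularComplex V) (p q m : V) : Prop :=
  Γ.le m p ∧ Γ.le m q ∧ ∀ x : V, Γ.le x p → Γ.le x q → Γ.le x m

/-- `j` is the least upper bound `p ∨ q`. -/
def ModularComplex.IsJoin (Γ : ModularComplex V) (p q j : V) : Prop :=
  Γ.le p j ∧ Γ.le q j ∧ ∀ x : V, Γ.le p x → Γ.le q x → Γ.le j x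

/-- `(p,q)` is a Boolean pair. -/
def ModularComplex.BooleanPair (Γ : ModularComplex V) (p q : V) : Prop :=
  ∃ (k : ℕ) (φ : Finset (Fin k) → V), Function.Injective φ ∧
    φ ∅ = p ∧ φ Finset.univ = q ∧
    ∀ (S : Finset (Fin k)) (i : Fin k), i ∉ S → Γ.ori (φ S) (φ (insert i S))

/-- An extended modular complex: a modular complex with an admissible relation `⊑`. -/
structure ExtendedModularComplex (V : Type*) [Fintype V] extends ModularComplex V where
  sq : V → V → Prop
  sq_le : ∀ {p q : V}, sq p q → toModularComplex.le p q
  sq_refl : ∀ p : V, sq p p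
  sq_edge : ∀ {p q : V}, ori p q → sq p q
  sq_interval : ∀ {p q a b : V}, sq p q → toModularComplex.le a b →
    a ∈ toModularComplex.Icc p q → b ∈ toModularComplex.Icc p q → sq a b
  sq_join : ∀ {p q1 q2 j : V}, sq p q1 → sq p q2 → toModularComplex.IsJoin q1 q2 j → sq p j
  sq_meet : ∀ {p1 p2 q m : V}, sq p1 q → sq p2 q → toModularComplex.IsMeet p1 p2 m → sq m q

/-- `L^+_p = {x : p ⊑ x}`. -/
def ExtendedModularComplex.Lpos (Γ : ExtendedModularComplex V) (p : V) : Set V :=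
  {x | Γ.sq p x}

/-- `L^-_p = {x : x ⊑ p}`. -/
def ExtendedModularComplex.Lneg (Γ : ExtendedModularComplex V) (p : V) : Set V :=
  {x | Γ.sq x p}

/-- `p, q` are ◇-neighbors. -/
def ExtendedModularComplex.DiamondNb (Γ : ExtendedModularComplex V) (p q : V) : Prop :=
  ∃ a b : V, Γ.sq a b ∧ p ∈ Γ.Icc a b ∧ q ∈ Γ.Icc a b

/-- The thickening `Δ(Γ)`. -/
def ExtendedModularComplex.thick (Γ : ExtendedModularComplex V) : SimpleGraph V where
  Adj p q := p ≠ q ∧ Γ.DiamondNb p q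
  symm := by
    constructor
    rintro p q ⟨hne, a, b, hab, hp, hq⟩
    exact ⟨hne.symm, a, b, hab, hq, hp⟩
  loopless := by constructor; rintro p ⟨hne, -⟩; exact hne rfl


/-!
For `p ⪯ q` the rank lemma makes the graph distance additive along the order, and the quadrangle
condition then shows that the metric interval `I(p,q)` is the order interval `[p,q]`. From this,
principal ideals and filters are convex, and a common upper bound `j` of `x, y` closest to `x` is
their join: for any other upper bound `u`, medians place `j` in a metric interval between two
vertices below `u`. Dually, meets exist above common lower bounds.

In `L⁺_p` meets and joins stay inside by axioms (i) and (ii) of `⊑`. Convexity is checked one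
edge at a time: if `w` is a neighbour of `x ∈ L⁺_p` on a geodesic to `y ∈ L⁺_p` and `x → w`, then
`w` is the join of `x` and the median of `p, w, y`, which lies in `L⁺_p` by (i). Reversing the
orientation and `⊑` turns `L⁻_p` into `L⁺_p`.
-/

section Graph

variable {α : Type*} {G : SimpleGraph α}

@[simp]
lemma mem_interval {x y z : α} : z ∈ interval G x y ↔ G.dist x z + G.dist z y = G.dist x y :=
  Iff.rfl

lemma _root_.SimpleGraph.Connected.exists_adj_dist_add_one (hG : G.Connected) {x z : α}
    (hxz : x ≠ z) : ∃ w, G.Adj x w ∧ G.dist w z + 1 = G.dist x z := by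
  obtain ⟨p, hp⟩ := hG.exists_walk_length_eq_dist x z
  cases p with
  | nil => exact absurd rfl hxz
  | @cons _ w _ hxw q =>
    refine ⟨w, hxw, ?_⟩
    have hq := SimpleGraph.dist_le q
    have htri : G.dist x z ≤ G.dist x w + G.dist w z := hG.dist_triangle
    rw [SimpleGraph.dist_eq_one_iff_adj.mpr hxw] at htri
    rw [SimpleGraph.Walk.length_cons] at hp
    omega

lemma exists_adj_mem_interval (hG : G.Connected) {x y z : α} (hz : z ∈ interval G x y)
    (hxz : x ≠ z) : ∃ w, G.Adj x w ∧ G.dist w y + 1 = G.dist x y ∧ z ∈ interval G w y := by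
  obtain ⟨w, hxw, hwz⟩ := hG.exists_adj_dist_add_one hxz
  have h₁ : G.dist w y ≤ G.dist w z + G.dist z y := hG.dist_triangle
  have h₂ : G.dist x y ≤ G.dist x w + G.dist w y := hG.dist_triangle
  rw [SimpleGraph.dist_eq_one_iff_adj.mpr hxw] at h₂
  rw [mem_interval] at hz
  exact ⟨w, hxw, by omega, by rw [mem_interval]; omega⟩

theorem convex_of_adj_mem (hG : G.Connected) {U : Set α}
    (h : ∀ x ∈ U, ∀ y ∈ U, ∀ w, G.Adj x w → G.dist w y + 1 = G.dist x y → w ∈ U) :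
    Convex G U := by
  intro x hx y hy z hz
  by_cases hxz : x = z
  · exact hxz ▸ hx
  obtain ⟨w, hxw, hwy, hzw⟩ := exists_adj_mem_interval hG hz hxz
  exact convex_of_adj_mem hG h w (h x hx y hy w hxw hwy) y hy hzw
termination_by x _ y => G.dist x y

lemma Modular.dist_eq_add_one_or (hm : Modular G) (hG : G.Connected) (u : α) {x y : α}
    (hxy : G.Adj x y) : G.dist y u = G.dist x u + 1 ∨ G.dist x u = G.dist y u + 1 := by
  obtain ⟨m, hm₁, hm₂, hm₃⟩ := hm x y u
  have hyx := SimpleGraph.dist_eq_one_iff_adj.mpr hxy.symm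
  simp only [mem_interval, SimpleGraph.dist_eq_one_iff_adj.mpr hxy] at hm₁ hm₂ hm₃
  rcases Nat.eq_zero_or_pos (G.dist x m) with h | h
  · obtain rfl := hG.dist_eq_zero_iff.mp h
    omega
  · obtain rfl := hG.dist_eq_zero_iff.mp (show G.dist m y = 0 by omega)
    omega

lemma Modular.dist_eq_two (hm : Modular G) (hG : G.Connected) {x w c y : α}
    (hxw : G.Adj x w) (hxc : G.Adj x c) (hne : w ≠ c) (hwc : G.dist w y = G.dist c y) :
    G.dist w c = 2 := by
  have htri : G.dist w c ≤ G.dist w x + G.dist x c := hG.dist_triangle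
  rw [SimpleGraph.dist_eq_one_iff_adj.mpr hxw.symm, SimpleGraph.dist_eq_one_iff_adj.mpr hxc] at htri
  have h₀ : G.dist w c ≠ 0 := fun h => hne (hG.dist_eq_zero_iff.mp h)
  have h₁ : G.dist w c ≠ 1 := fun h => by
    have := hm.dist_eq_add_one_or hG y (SimpleGraph.dist_eq_one_iff_adj.mp h)
    omega
  omega

/-- The quadrangle condition of modular graphs. -/
theorem Modular.exists_isFourCycle (hm : Modular G) (hG : G.Connected) {x w c y : α}
    (hxw : G.Adj x w) (hxc : G.Adj x c) (hne : w ≠ c) (hw : G.dist w y + 1 = G.dist x y)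
    (hc : G.dist c y + 1 = G.dist x y) :
    ∃ z, IsFourCycle G x c z w ∧ G.dist z y + 1 = G.dist c y := by
  have hwc := hm.dist_eq_two hG hxw hxc hne (y := y) (by omega)
  have hcw : G.dist c w = 2 := SimpleGraph.dist_comm.trans hwc
  obtain ⟨z, hz₁, hz₂, hz₃⟩ := hm w c y
  simp only [mem_interval, hwc] at hz₁ hz₂ hz₃
  have hwz : G.dist w z ≠ 0 := fun h => by
    obtain rfl := hG.dist_eq_zero_iff.mp h
    omega
  have hzc : G.dist z c ≠ 0 := fun h => by
    obtain rfl := hG.dist_eq_zero_iff.mp h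
    omega
  have hzw : G.Adj z w := SimpleGraph.dist_eq_one_iff_adj.mp <| by
    rw [SimpleGraph.dist_comm]; omega
  have hcz : G.Adj c z := SimpleGraph.dist_eq_one_iff_adj.mp <| by
    rw [SimpleGraph.dist_comm]; omega
  refine ⟨z, ⟨hxc, hcz, hzw, hxw.symm, fun h => ?_, hne.symm⟩, by omega⟩
  subst h
  omega

end Graph

namespace ModularComplex

variable (Γ : ModularComplex V)

lemma admissible' {x₁ x₂ x₃ x₄ : V} (hc : IsFourCycle Γ.G x₁ x₂ x₃ x₄) (h : Γ.ori x₄ x₁) :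
    Γ.ori x₃ x₂ :=
  let ⟨h₁₂, h₂₃, h₃₄, h₄₁, h₁₃, h₂₄⟩ := hc
  Γ.admissible ⟨h₄₁, h₁₂, h₂₃, h₃₄, h₂₄.symm, h₁₃⟩ h

lemma le_of_ori {x y : V} (h : Γ.ori x y) : Γ.le x y := Relation.ReflTransGen.single h

/-- The rank lemma. If instead `w` were closer to `y` than `x`, the quadrangle condition would
close a square on `w`, `x` and the successor `c` of `x`, and admissibility would orient its fourth
vertex towards `c`, contradicting the induction hypothesis at `c`. -/
theorem dist_eq_add_one_of_ori_of_le {w x y : V} (hwx : Γ.ori w x) (hxy : Γ.le x y) :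
    Γ.G.dist w y = Γ.G.dist x y + 1 := by
  induction hxy using Relation.ReflTransGen.head_induction_on generalizing w with
  | refl => simp [SimpleGraph.dist_eq_one_iff_adj.mpr (Γ.ori_adj hwx)]
  | @head x c hxc _ ih =>
    have hx := ih hxc
    refine (Γ.modular.dist_eq_add_one_or Γ.connected y (Γ.ori_adj hwx)).resolve_left
      fun hw => ?_
    have hne : w ≠ c := by
      rintro rfl
      exact (Γ.ori_adj hxc).ne (Γ.acyclic (Γ.le_of_ori hxc) (Γ.le_of_ori hwx))
    obtain ⟨z, hcyc, hz⟩ := Γ.modular.exists_isFourCycle Γ.connected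
      (Γ.ori_adj hwx).symm (Γ.ori_adj hxc) hne (y := y) (by omega) (by omega)
    have := ih (Γ.admissible' hcyc hwx)
    omega

lemma mem_interval_of_le_of_le {p x q : V} (hpx : Γ.le p x) (hxq : Γ.le x q) :
    x ∈ interval Γ.G p q := by
  induction hpx using Relation.ReflTransGen.head_induction_on with
  | refl => simp [interval]
  | @head a c hac hcx ih =>
    have h₁ := Γ.dist_eq_add_one_of_ori_of_le hac hcx
    have h₂ := Γ.dist_eq_add_one_of_ori_of_le hac (hcx.trans hxq)
    simp only [mem_interval] at ih ⊢
    omega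

lemma exists_ori_of_le_of_ne {p q : V} (h : Γ.le p q) (hne : p ≠ q) :
    ∃ c, Γ.ori p c ∧ Γ.le c q ∧ Γ.G.dist c q + 1 = Γ.G.dist p q := by
  obtain rfl | ⟨c, hpc, hcq⟩ := Relation.ReflTransGen.cases_head h
  · exact absurd rfl hne
  · exact ⟨c, hpc, hcq, (Γ.dist_eq_add_one_of_ori_of_le hpc hcq).symm⟩

theorem ori_and_le_of_adj {p q w : V} (hpq : Γ.le p q) (hpw : Γ.G.Adj p w)
    (hw : Γ.G.dist w q + 1 = Γ.G.dist p q) : Γ.ori p w ∧ Γ.le w q := by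
  have hne : p ≠ q := by
    rintro rfl
    simp at hw
  obtain ⟨c, hpc, hcq, hc⟩ := Γ.exists_ori_of_le_of_ne hpq hne
  have hpw' : Γ.ori p w := (Γ.ori_total hpw).resolve_right fun hwp => by
    have := Γ.dist_eq_add_one_of_ori_of_le hwp hpq
    omega
  refine ⟨hpw', ?_⟩
  by_cases hwc : w = c
  · exact hwc ▸ hcq
  obtain ⟨z, hcyc, hz⟩ :=
    Γ.modular.exists_isFourCycle Γ.connected hpw (Γ.ori_adj hpc) hwc hw hc
  exact .head (Γ.admissible hcyc hpc) (ori_and_le_of_adj hcq hcyc.2.1 hz).2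
termination_by Γ.G.dist p q

lemma mem_Icc_of_mem_interval {p q z : V} (hpq : Γ.le p q) (hz : z ∈ interval Γ.G p q) :
    z ∈ Γ.Icc p q := by
  by_cases hpz : p = z
  · exact hpz ▸ ⟨.refl, hpq⟩
  obtain ⟨w, hpw, hw, hzw⟩ := exists_adj_mem_interval Γ.connected hz hpz
  obtain ⟨hpw', hwq⟩ := Γ.ori_and_le_of_adj hpq hpw hw
  obtain ⟨hwz, hzq⟩ := mem_Icc_of_mem_interval hwq hzw
  exact ⟨.head hpw' hwz, hzq⟩
termination_by Γ.G.dist p q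

theorem interval_eq_Icc {p q : V} (h : Γ.le p q) : interval Γ.G p q = Γ.Icc p q :=
  Set.Subset.antisymm (fun _ => Γ.mem_Icc_of_mem_interval h)
    fun _ hx => Γ.mem_interval_of_le_of_le hx.1 hx.2

lemma exists_median_of_le_of_le {x a b : V} (ha : Γ.le x a) (hb : Γ.le x b) :
    ∃ m ∈ interval Γ.G a b, Γ.le x m ∧ Γ.le m a ∧ Γ.le m b := by
  obtain ⟨m, hxa, hab, hxb⟩ := Γ.modular x a b
  rw [Γ.interval_eq_Icc ha] at hxa
  rw [Γ.interval_eq_Icc hb] at hxb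
  exact ⟨m, hab, hxa.1, hxa.2, hxb.2⟩

def op : ModularComplex V where
  G := Γ.G
  connected := Γ.connected
  modular := Γ.modular
  ori := flip Γ.ori
  ori_adj h := (Γ.ori_adj h).symm
  ori_total h := (Γ.ori_total h).symm
  acyclic h₁ h₂ := Γ.acyclic (Relation.reflTransGen_swap.mp h₂) (Relation.reflTransGen_swap.mp h₁)
  admissible := fun ⟨h₁₂, h₂₃, h₃₄, h₄₁, h₁₃, h₂₄⟩ h =>
    Γ.admissible ⟨h₁₂.symm, h₄₁.symm, h₃₄.symm, h₂₃.symm, h₂₄, h₁₃⟩ h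

@[simp]
lemma op_G : Γ.op.G = Γ.G := rfl

@[simp]
lemma op_le {x y : V} : Γ.op.le x y ↔ Γ.le y x := Relation.reflTransGen_swap

@[simp]
lemma op_isJoin {x y j : V} : Γ.op.IsJoin x y j ↔ Γ.IsMeet x y j := by
  simp [IsJoin, IsMeet]

@[simp]
lemma op_isMeet {x y m : V} : Γ.op.IsMeet x y m ↔ Γ.IsJoin x y m := by
  simp [IsJoin, IsMeet]

lemma exists_median_of_le_of_le' {x a b : V} (ha : Γ.le a x) (hb : Γ.le b x) :
    ∃ m ∈ interval Γ.G a b, Γ.le m x ∧ Γ.le a m ∧ Γ.le b m := by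
  simpa using Γ.op.exists_median_of_le_of_le ((Γ.op_le).mpr ha) ((Γ.op_le).mpr hb)

theorem le_of_adj_of_le_of_le {u x y w : V} (hx : Γ.le x u) (hy : Γ.le y u)
    (hxw : Γ.G.Adj x w) (hw : Γ.G.dist w y + 1 = Γ.G.dist x y) : Γ.le w u := by
  obtain hxw' | hwx := Γ.ori_total hxw
  swap
  · exact .head hwx hx
  obtain ⟨m, hm, hmu, hxm, hym⟩ := Γ.exists_median_of_le_of_le' hx hy
  by_cases hxm' : x = m
  · subst hxm'
    have hwx : w ∈ interval Γ.G y x := by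
      simp only [mem_interval, SimpleGraph.dist_comm (v := x),
        SimpleGraph.dist_eq_one_iff_adj.mpr hxw, SimpleGraph.dist_comm (u := y)]
      omega
    exact ((Γ.interval_eq_Icc hym ▸ hwx).2).trans hx
  obtain ⟨c, hxc, hcm, hc⟩ := Γ.exists_ori_of_le_of_ne hxm hxm'
  by_cases hwc : w = c
  · exact hwc ▸ hcm.trans hmu
  have hcy : Γ.G.dist c y + 1 = Γ.G.dist x y := by
    have h₁ := Γ.connected.dist_triangle (u := c) (v := m) (w := y)
    have h₂ := Γ.connected.dist_triangle (u := x) (v := c) (w := y)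
    rw [SimpleGraph.dist_eq_one_iff_adj.mpr (Γ.ori_adj hxc)] at h₂
    simp only [mem_interval] at hm
    omega
  obtain ⟨z, hcyc, hz⟩ :=
    Γ.modular.exists_isFourCycle Γ.connected hxw (Γ.ori_adj hxc) hwc hw hcy
  exact .head (Γ.admissible hcyc hxc)
    (le_of_adj_of_le_of_le (hcm.trans hmu) hy hcyc.2.1 hz)
termination_by Γ.G.dist x y

theorem convex_setOf_le (u : V) : Convex Γ.G {z | Γ.le z u} :=
  convex_of_adj_mem Γ.connected fun _ hx _ hy _ => Γ.le_of_adj_of_le_of_le hx hy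

theorem convex_setOf_ge (u : V) : Convex Γ.G {z | Γ.le u z} := by
  simpa using Γ.op.convex_setOf_le u

theorem exists_isJoin {x y u : V} (hx : Γ.le x u) (hy : Γ.le y u) : ∃ j, Γ.IsJoin x y j := by
  obtain ⟨j, ⟨hxj, hyj⟩, hmin⟩ := Set.exists_min_image {z | Γ.le x z ∧ Γ.le y z}
    (Γ.G.dist x) (Set.toFinite _) ⟨u, hx, hy⟩
  refine ⟨j, hxj, hyj, fun u' hxu hyu => ?_⟩
  obtain ⟨w, -, hxw, hwj, hwu⟩ := Γ.exists_median_of_le_of_le hxj hxu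
  obtain ⟨w', -, hyw', hw'j, hw'u⟩ := Γ.exists_median_of_le_of_le hyj hyu
  obtain ⟨t, ht, htj, hwt, hw't⟩ := Γ.exists_median_of_le_of_le' hwj hw'j
  -- `t` is a common upper bound below `j`, hence `j` itself, since `j` is one closest to `x`.
  obtain rfl : t = j := by
    have h₁ := hmin t ⟨hxw.trans hwt, hyw'.trans hw't⟩
    have h₂ := Γ.mem_interval_of_le_of_le (hxw.trans hwt) htj
    simp only [mem_interval] at h₂
    exact Γ.connected.dist_eq_zero_iff.mp (by omega)
  exact Γ.convex_setOf_le u' w hwu w' hw'u ht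

theorem exists_isMeet {x y c : V} (hx : Γ.le c x) (hy : Γ.le c y) : ∃ m, Γ.IsMeet x y m := by
  simpa using Γ.op.exists_isJoin ((Γ.op_le).mpr hx) ((Γ.op_le).mpr hy)

lemma isJoin_of_ori {x w v : V} (hxw : Γ.ori x w) (hvw : Γ.le v w) (hvx : ¬ Γ.le v x) :
    Γ.IsJoin x v w := by
  obtain ⟨j, hxj, hvj, hj⟩ := Γ.exists_isJoin (Γ.le_of_ori hxw) hvw
  have hjw := hj w (Γ.le_of_ori hxw) hvw
  have h := Γ.mem_interval_of_le_of_le hxj hjw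
  simp only [mem_interval, SimpleGraph.dist_eq_one_iff_adj.mpr (Γ.ori_adj hxw)] at h
  rcases Nat.eq_zero_or_pos (Γ.G.dist x j) with h₀ | h₀
  · obtain rfl := Γ.connected.dist_eq_zero_iff.mp h₀
    exact absurd hvj hvx
  · obtain rfl := Γ.connected.dist_eq_zero_iff.mp (show Γ.G.dist j w = 0 by omega)
    exact ⟨hxj, hvj, hj⟩

end ModularComplex

namespace ExtendedModularComplex

variable (Γ : ExtendedModularComplex V)

def op : ExtendedModularComplex V where
  toModularComplex := Γ.toModularComplex.op
  sq := flip Γ.sq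
  sq_le h := Relation.reflTransGen_swap.mpr (Γ.sq_le h)
  sq_refl := Γ.sq_refl
  sq_edge h := Γ.sq_edge h
  sq_interval h hab ha hb := by
    simp only [ModularComplex.Icc, ModularComplex.op_le, Set.mem_ofPred_eq] at ha hb hab
    exact Γ.sq_interval h hab ⟨hb.2, hb.1⟩ ⟨ha.2, ha.1⟩
  sq_join h₁ h₂ hj := Γ.sq_meet h₁ h₂ ((Γ.toModularComplex.op_isJoin).mp hj)
  sq_meet h₁ h₂ hm := Γ.sq_join h₁ h₂ ((Γ.toModularComplex.op_isMeet).mp hm)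

@[simp]
lemma op_toModularComplex : Γ.op.toModularComplex = Γ.toModularComplex.op := rfl

@[simp]
lemma op_Lpos (p : V) : Γ.op.Lpos p = Γ.Lneg p := rfl

lemma exists_isMeet_mem_Lpos {p a b : V} (ha : a ∈ Γ.Lpos p) (hb : b ∈ Γ.Lpos p) :
    ∃ m, Γ.IsMeet a b m ∧ m ∈ Γ.Lpos p := by
  obtain ⟨m, hm⟩ := Γ.exists_isMeet (Γ.sq_le ha) (Γ.sq_le hb)
  have hpm := hm.2.2 p (Γ.sq_le ha) (Γ.sq_le hb)
  exact ⟨m, hm, Γ.sq_interval ha hpm ⟨.refl, Γ.sq_le ha⟩ ⟨hpm, hm.1⟩⟩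

lemma exists_isJoin_mem_Lpos {p a b u : V} (ha : a ∈ Γ.Lpos p) (hb : b ∈ Γ.Lpos p)
    (hau : Γ.le a u) (hbu : Γ.le b u) : ∃ j, Γ.IsJoin a b j ∧ j ∈ Γ.Lpos p := by
  obtain ⟨j, hj⟩ := Γ.exists_isJoin hau hbu
  exact ⟨j, hj, Γ.sq_join ha hb hj⟩

theorem mem_Lpos_of_adj {p x y w : V} (hx : x ∈ Γ.Lpos p) (hy : y ∈ Γ.Lpos p)
    (hxw : Γ.G.Adj x w) (hw : Γ.G.dist w y + 1 = Γ.G.dist x y) : w ∈ Γ.Lpos p := by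
  have hwxy : w ∈ interval Γ.G x y := by
    simp only [mem_interval, SimpleGraph.dist_eq_one_iff_adj.mpr hxw]
    omega
  have hpw : Γ.le p w := Γ.convex_setOf_ge p x (Γ.sq_le hx) y (Γ.sq_le hy) hwxy
  obtain hxw' | hwx := Γ.ori_total hxw
  swap
  · exact Γ.sq_interval hx hpw ⟨.refl, Γ.sq_le hx⟩ ⟨hpw, Γ.le_of_ori hwx⟩
  obtain ⟨v, hv, hpv, hvw, hvy⟩ := Γ.exists_median_of_le_of_le hpw (Γ.sq_le hy)
  have hv' : v ∈ Γ.Lpos p := Γ.sq_interval hy hpv ⟨.refl, Γ.sq_le hy⟩ ⟨hpv, hvy⟩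
  have hvx : ¬ Γ.le v x := fun hvx => by
    have h₁ := Γ.mem_interval_of_le_of_le hvx (Γ.le_of_ori hxw')
    have h₂ := Γ.connected.dist_triangle (u := x) (v := v) (w := y)
    simp only [mem_interval, SimpleGraph.dist_eq_one_iff_adj.mpr hxw] at h₁ hv
    have hxv : Γ.G.dist x v = Γ.G.dist v x := SimpleGraph.dist_comm
    have hwv : Γ.G.dist w v = Γ.G.dist v w := SimpleGraph.dist_comm
    omega
  exact Γ.sq_join hx hv' (Γ.isJoin_of_ori hxw' hvw hvx)

theorem convex_Lpos (p : V) : Convex Γ.G (Γ.Lpos p) :=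
  convex_of_adj_mem Γ.connected fun _ hx _ hy _ => Γ.mem_Lpos_of_adj hx hy

end ExtendedModularComplex

/-- `L^+_p` and `L^-_p` are modular semilattices convex in `Γ`:
meets/joins exist appropriately and remain in the sets, which are convex. -/
theorem Lpos_Lneg_semilattice_convex (Γ : ExtendedModularComplex V) (p : V) :
    (∀ a ∈ Γ.Lpos p, ∀ b ∈ Γ.Lpos p, ∃ m : V, Γ.IsMeet a b m ∧ m ∈ Γ.Lpos p) ∧
    (∀ a ∈ Γ.Lpos p, ∀ b ∈ Γ.Lpos p, (∃ u : V, Γ.le a u ∧ Γ.le b u) →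
      ∃ j : V, Γ.IsJoin a b j ∧ j ∈ Γ.Lpos p) ∧
    Convex Γ.G (Γ.Lpos p) ∧
    (∀ a ∈ Γ.Lneg p, ∀ b ∈ Γ.Lneg p, ∃ j : V, Γ.IsJoin a b j ∧ j ∈ Γ.Lneg p) ∧
    (∀ a ∈ Γ.Lneg p, ∀ b ∈ Γ.Lneg p, (∃ u : V, Γ.le u a ∧ Γ.le u b) →
      ∃ m : V, Γ.IsMeet a b m ∧ m ∈ Γ.Lneg p) ∧
    Convex Γ.G (Γ.Lneg p) := by
  refine ⟨fun a ha b hb => Γ.exists_isMeet_mem_Lpos ha hb,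
    fun a ha b hb ⟨u, hau, hbu⟩ => Γ.exists_isJoin_mem_Lpos ha hb hau hbu,
    Γ.convex_Lpos p, fun a ha b hb => ?_, fun a ha b hb ⟨u, hua, hub⟩ => ?_, Γ.op.convex_Lpos p⟩
  · simpa using Γ.op.exists_isMeet_mem_Lpos (p := p) ha hb
  · simpa using Γ.op.exists_isJoin_mem_Lpos (p := p) ha hb
      ((Γ.toModularComplex.op_le).mpr hua) ((Γ.toModularComplex.op_le).mpr hub)

end ZeroExt
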